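/- arXiv:2412.20443 — 2 statements merged into one kernel-verified Lean document; each statement's English description precedes it below -/
import Mathlib

section
/- Let w₁ and w₂ be distinct integers, each lying outside {0, 2}, such that 4w₁³ − 27 and 4w₂³ − 27 are both squarefree, and let θ₁, θ₂ be roots of x³ − w₁x − 1 and x³ − w₂x − 1 respectively. Then the cubic fields ℚ(θ₁) and ℚ(θ₂) are not isomorphic (in particular, ℚ(θ₁) ≠ ℚ(θ₂)). -/
/-!
For a root `θ` of `x³ - w x - 1` (irreducible when `w ∉ {0, 2}`) the powers `1, θ, θ²` form a
`ℚ`-basis of `ℚ(θ)`. Multiplication by `θ` acts on it by the companion matrix, whose power traces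
give the trace form, and its determinant `4 w³ - 27` is the discriminant of this basis.
Discriminants of two bases of one field differ by the square of a change-of-basis determinant,
and an isomorphism `ℚ(θ₁) ≃ ℚ(θ₂)` carries a basis of the first field to one of the second. So
`4 w₁³ - 27 = q² (4 w₂³ - 27)` for some `q ∈ ℚ`; as both sides are squarefree integers this
forces `q² = 1`, and then `w₁³ = w₂³` gives `w₁ = w₂`.
-/

open Polynomial IntermediateField

theorem Algebra.discr_eq_det_toMatrix_sq_mul {A B ι : Type*} [CommRing A] [CommRing B]
    [Algebra A B] [Fintype ι] [DecidableEq ι] (b : Module.Basis ι A B) (v : ι → B) :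
    Algebra.discr A v = (b.toMatrix v).det ^ 2 * Algebra.discr A b := by
  rw [← Algebra.discr_of_matrix_vecMul, b.toMatrix_map_vecMul]

theorem Int.eq_of_squarefree_of_cast_eq_sq_mul {d₁ d₂ : ℤ} (h₁ : Squarefree d₁)
    (h₂ : Squarefree d₂) {q : ℚ} (h : (d₁ : ℚ) = q ^ 2 * d₂) : d₁ = d₂ := by
  have hZ : (q.den : ℤ) ^ 2 * d₁ = q.num ^ 2 * d₂ := by
    have hq : ((q.den : ℚ)) ^ 2 * d₁ = (q.num : ℚ) ^ 2 * d₂ := by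
      rw [h, ← Rat.mul_den_eq_num q]; ring
    exact_mod_cast hq
  have hcop : IsCoprime (q.den : ℤ) q.num := by
    rw [Int.isCoprime_iff_gcd_eq_one, Int.gcd_comm]; exact q.reduced
  have hden : (q.den : ℤ) = 1 := by
    have hdvd : (q.den : ℤ) * q.den ∣ d₂ := by
      rw [← sq]; exact hcop.pow.dvd_of_dvd_mul_left ⟨d₁, hZ.symm⟩
    rcases Int.isUnit_iff.mp (h₂ _ hdvd) with h | h <;> omega
  rw [hden, one_pow, one_mul] at hZ
  have hnum : q.num ^ 2 = 1 := Int.isUnit_sq (h₁ _ ⟨d₂, by rw [hZ]; ring⟩)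
  rw [hZ, hnum, one_mul]

theorem natDegree_X_pow_three_sub_C_mul_X_sub_one {R : Type*} [CommRing R] [Nontrivial R]
    (a : R) : (X ^ 3 - C a * X - 1).natDegree = 3 := by
  compute_degree!

theorem irreducible_X_pow_three_sub_C_mul_X_sub_one {w : ℤ} (h0 : w ≠ 0) (h2 : w ≠ 2) :
    Irreducible (X ^ 3 - C (w : ℚ) * X - 1) := by
  refine irreducible_of_degree_le_three_of_not_isRoot
    (by rw [natDegree_X_pow_three_sub_C_mul_X_sub_one]; decide) fun r hr => ?_
  have hmonic : (X ^ 3 - C w * X - 1 : ℤ[X]).Monic := by monicity!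
  obtain ⟨z, rfl⟩ := isInteger_of_is_root_of_monic hmonic (r := r) (by simpa using hr)
  have hz : z * (z ^ 2 - w) = 1 := by
    have : ((z : ℚ) ^ 3 - w * z - 1) = 0 := by simpa using hr
    have : z ^ 3 - w * z - 1 = 0 := by exact_mod_cast this
    linear_combination this
  rcases Int.isUnit_iff.mp (IsUnit.of_mul_eq_one _ hz) with rfl | rfl <;> omega

section CompanionMatrix

variable {R S : Type*} [CommRing R] [CommRing S] [Algebra R S] {w : R} {θ : S}
  {b : Module.Basis (Fin 3) R S}

theorem Algebra.leftMulMatrix_eq_of_pow_three_eq (hb : ∀ i, b i = θ ^ (i : ℕ))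
    (hθ : θ ^ 3 = algebraMap R S w * θ + 1) :
    Algebra.leftMulMatrix b θ = !![0, 0, 1; 1, 0, w; 0, 1, 0] := by
  have h0 : θ * b 0 = b 1 := by simp [hb]
  have h1 : θ * b 1 = b 2 := by simp [hb, sq]
  have h2 : θ * b 2 = b 0 + w • b 1 := by
    simp [hb, Algebra.smul_def]; linear_combination hθ
  ext i j
  fin_cases i <;> fin_cases j <;>
    simp [Algebra.leftMulMatrix_eq_repr_mul, h0, h1, h2]

theorem Algebra.discr_eq_of_pow_three_eq (hb : ∀ i, b i = θ ^ (i : ℕ))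
    (hθ : θ ^ 3 = algebraMap R S w * θ + 1) :
    Algebra.discr R b = 4 * w ^ 3 - 27 := by
  have htr (k : ℕ) :
      Algebra.trace R S (θ ^ k) = (!![0, 0, 1; 1, 0, w; 0, 1, 0] ^ k).trace := by
    rw [Algebra.trace_eq_matrix_trace b, map_pow, Algebra.leftMulMatrix_eq_of_pow_three_eq hb hθ]
  rw [Algebra.discr_def, Matrix.det_fin_three]
  simp only [Algebra.traceMatrix_apply, Algebra.traceForm_apply, hb, ← pow_add, htr]
  simp [pow_succ, Matrix.trace_fin_three]
  ring

end CompanionMatrix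

section RationalCubic

variable {K : Type*} [Field K] [Algebra ℚ K] {w : ℤ} {θ : K}

theorem minpoly_eq_of_pow_three_eq (hθ : θ ^ 3 = w * θ + 1) (h0 : w ≠ 0) (h2 : w ≠ 2) :
    minpoly ℚ θ = X ^ 3 - C (w : ℚ) * X - 1 :=
  (minpoly.eq_of_irreducible_of_monic (irreducible_X_pow_three_sub_C_mul_X_sub_one h0 h2)
    (by simp [hθ]) (by monicity!)).symm

theorem exists_basis_discr_eq_of_pow_three_eq (hK : Module.finrank ℚ K = 3)
    (hθ : θ ^ 3 = w * θ + 1) (h0 : w ≠ 0) (h2 : w ≠ 2) :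
    ∃ b : Module.Basis (Fin 3) ℚ K, Algebra.discr ℚ b = 4 * (w : ℚ) ^ 3 - 27 := by
  have hli := linearIndependent_pow (K := ℚ) θ
  rw [minpoly_eq_of_pow_three_eq hθ h0 h2, natDegree_X_pow_three_sub_C_mul_X_sub_one] at hli
  refine ⟨basisOfLinearIndependentOfCardEqFinrank hli (by simp [hK]), ?_⟩
  exact Algebra.discr_eq_of_pow_three_eq (θ := θ) (w := (w : ℚ)) (by simp) (by simpa using hθ)

theorem finrank_adjoin_eq_three_of_pow_three_eq (hθ : θ ^ 3 = w * θ + 1) (h0 : w ≠ 0)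
    (h2 : w ≠ 2) : Module.finrank ℚ ℚ⟮θ⟯ = 3 := by
  have hint : IsIntegral ℚ θ :=
    ⟨X ^ 3 - C (w : ℚ) * X - 1, by monicity!, by rw [← aeval_def]; simp [hθ]⟩
  rw [adjoin.finrank hint, minpoly_eq_of_pow_three_eq hθ h0 h2,
    natDegree_X_pow_three_sub_C_mul_X_sub_one]

theorem AdjoinSimple.gen_pow_three_eq (hθ : θ ^ 3 = w * θ + 1) :
    AdjoinSimple.gen ℚ θ ^ 3 = w * AdjoinSimple.gen ℚ θ + 1 :=
  Subtype.ext (by simpa using hθ)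

end RationalCubic

theorem stmt_4 (w₁ w₂ : ℤ) (hne : w₁ ≠ w₂)
    (h10 : w₁ ≠ 0) (h12 : w₁ ≠ 2) (h20 : w₂ ≠ 0) (h22 : w₂ ≠ 2)
    (hsf₁ : Squarefree (4 * w₁ ^ 3 - 27)) (hsf₂ : Squarefree (4 * w₂ ^ 3 - 27))
    (θ₁ θ₂ : ℂ)
    (hθ₁ : aeval θ₁ (X ^ 3 - C w₁ * X - 1 : ℤ[X]) = 0)
    (hθ₂ : aeval θ₂ (X ^ 3 - C w₂ * X - 1 : ℤ[X]) = 0) :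
    ¬ Nonempty
      ((IntermediateField.adjoin ℚ {θ₁} : IntermediateField ℚ ℂ) ≃ₐ[ℚ]
        (IntermediateField.adjoin ℚ {θ₂} : IntermediateField ℚ ℂ)) := by
  rintro ⟨σ⟩
  have hc₁ : θ₁ ^ 3 = w₁ * θ₁ + 1 := by simp at hθ₁; linear_combination hθ₁
  have hc₂ : θ₂ ^ 3 = w₂ * θ₂ + 1 := by simp at hθ₂; linear_combination hθ₂
  obtain ⟨b₁, hb₁⟩ := exists_basis_discr_eq_of_pow_three_eq (K := ℚ⟮θ₁⟯)
    (finrank_adjoin_eq_three_of_pow_three_eq hc₁ h10 h12)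
    (AdjoinSimple.gen_pow_three_eq hc₁) h10 h12
  obtain ⟨b₂, hb₂⟩ := exists_basis_discr_eq_of_pow_three_eq (K := ℚ⟮θ₂⟯)
    (finrank_adjoin_eq_three_of_pow_three_eq hc₂ h20 h22)
    (AdjoinSimple.gen_pow_three_eq hc₂) h20 h22
  have key : ((4 * w₁ ^ 3 - 27 : ℤ) : ℚ) =
      (b₂.toMatrix (σ ∘ b₁)).det ^ 2 * ((4 * w₂ ^ 3 - 27 : ℤ) : ℚ) := by
    push_cast
    rw [← hb₁, ← hb₂, Algebra.discr_eq_discr_of_algEquiv b₁ σ,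
      Algebra.discr_eq_det_toMatrix_sq_mul]
  have hcube : w₁ ^ 3 = w₂ ^ 3 := by
    linarith [Int.eq_of_squarefree_of_cast_eq_sq_mul hsf₁ hsf₂ key]
  exact hne ((Odd.pow_inj (by decide)).mp hcube)
end

section
/- Let N be an integer with N ≥ 3 and N ≡ 3 (mod 4), let b₁ and b₂ be positive integers, and suppose that the trinomials f_{N,b₁}(x) := x^N − x − (N−1)N^{b₁} and f_{N,b₂}(x) := x^N − x − (N−1)N^{b₂} are both monogenic. If a root of f_{N,b₁} and a root of f_{N,b₂} generate the same degree-N extension of ℚ, then b₁ = b₂. -/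
open Polynomial

/-- A monic polynomial `f ∈ ℤ[x]` is monogenic if it is irreducible over `ℚ` and
`ℤ[θ]` is the ring of integers (the integral closure of `ℤ`) of `ℚ(θ)`, where `θ`
is a root of `f`. -/
def IsMonogenic (f : Polynomial ℤ) : Prop :=
  f.Monic ∧ Irreducible (f.map (algebraMap ℤ ℚ)) ∧
    Algebra.adjoin ℤ {AdjoinRoot.root (f.map (algebraMap ℤ ℚ))} =
      integralClosure ℤ (AdjoinRoot (f.map (algebraMap ℤ ℚ)))

/-!
If `ℤ[θ]` is the full ring of integers of `K = ℚ(θ)`, the discriminant of the power basis of `θ`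
is the discriminant of `K`: two such generators of the same field have power bases whose
change-of-basis matrices are integral in both directions, hence equal discriminants. For
`f = X ^ N - X - m` the discriminant is `± (N ^ N (-m) ^ (N - 1) - (N - 1) ^ (N - 1))`, the norm
of `f'(θ)`, which is computed from `θ f'(θ) = (N - 1) θ + N m`. It determines `m > 0`, and
`m = (N - 1) N ^ b` determines `b`.
-/

theorem natDegree_X_pow_sub_X_sub_C {R : Type*} [CommRing R] [Nontrivial R] {N : ℕ}
    (hN : 2 ≤ N) (m : R) : (X ^ N - X - C m : R[X]).natDegree = N := by
  rw [sub_sub, natDegree_sub_eq_left_of_natDegree_lt] <;> compute_degree!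

theorem PowerBasis.norm_algebraMap_sub_gen {R S : Type*} [CommRing R] [CommRing S] [Algebra R S]
    (pb : PowerBasis R S) (t : R) :
    Algebra.norm R (algebraMap R S t - pb.gen) = (minpoly R pb.gen).eval t := by
  rw [Algebra.norm_eq_matrix_det pb.basis, map_sub, AlgHom.commutes, ← charpoly_leftMulMatrix,
    Matrix.eval_charpoly, Matrix.algebraMap_eq_diagonal]
  rfl

theorem PowerBasis.norm_aeval_derivative_minpoly_of_eq_X_pow_sub_X_sub_C {F K : Type*} [Field F]
    [CommRing K] [Algebra F K] (pb : PowerBasis F K) {N : ℕ} {m : F} (hN : 2 ≤ N)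
    (hN₁ : (N : F) ≠ 1) (hm : m ≠ 0) (hmin : minpoly F pb.gen = X ^ N - X - C m) :
    Algebra.norm F (aeval pb.gen (derivative (minpoly F pb.gen))) =
      N ^ N * (-m) ^ (N - 1) - (N - 1) ^ (N - 1) := by
  set x := pb.gen
  have hfinrank : Module.finrank F K = N := by
    rw [pb.finrank, ← pb.natDegree_minpoly, hmin, natDegree_X_pow_sub_X_sub_C hN]
  obtain ⟨k, rfl⟩ : ∃ k, N = k + 1 := ⟨N - 1, by omega⟩
  set c : F := (k + 1 : ℕ) - 1 with hc
  set e : F := (k + 1 : ℕ) * m / c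
  have hce : c * e = (k + 1 : ℕ) * m := mul_div_cancel₀ _ (sub_ne_zero.mpr hN₁)
  have hx : x ^ k * x = x + algebraMap F K m := by
    have := minpoly.aeval F x
    simp only [hmin, map_sub, map_pow, aeval_X, aeval_C] at this
    linear_combination this
  set w := aeval x (derivative (minpoly F x))
  -- `x f'(x) = N x ^ N - x = (N - 1) (x + e)`, so both norms below are values of `f`.
  have hxw : (algebraMap F K 0 - x) * w = algebraMap F K c * (algebraMap F K (-e) - x) := by
    have hce' : algebraMap F K c * algebraMap F K e = (k + 1 : ℕ) * algebraMap F K m := by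
      rw [← map_mul, hce, map_mul, map_natCast]
    have hc' : algebraMap F K c = (k + 1 : ℕ) - 1 := by simp [c]
    simp only [w, hmin, derivative_X_pow, derivative_X, derivative_C, map_sub, map_mul, map_natCast,
      aeval_X_pow, map_one, map_zero, map_neg, sub_zero, add_tsub_cancel_right]
    linear_combination (-(k + 1 : ℕ) : K) * hx + hce' + x * hc'
  have hnorm : -m * Algebra.norm F w = c ^ (k + 1) * ((-e) ^ (k + 1) + e - m) := by
    have := congrArg (Algebra.norm F) hxw
    rw [map_mul, map_mul, pb.norm_algebraMap_sub_gen, pb.norm_algebraMap_sub_gen,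
      Algebra.norm_algebraMap, hfinrank, hmin] at this
    simpa only [eval_sub, eval_pow, eval_X, eval_C, zero_pow k.succ_ne_zero, sub_zero, zero_sub,
      sub_neg_eq_add] using this
  apply mul_left_cancel₀ (neg_ne_zero.mpr hm)
  rw [hnorm, add_tsub_cancel_right]
  calc c ^ (k + 1) * ((-e) ^ (k + 1) + e - m)
      = (c * -e) ^ (k + 1) + c ^ k * (c * e) - c ^ (k + 1) * m := by rw [mul_pow]; ring
    _ = ((k + 1 : ℕ) * -m) ^ (k + 1) + c ^ k * ((k + 1 : ℕ) * m) - c ^ (k + 1) * m := by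
      rw [mul_neg, hce, mul_neg]
    _ = -m * ((k + 1 : ℕ) ^ (k + 1) * (-m) ^ k - c ^ k) := by
      rw [mul_pow, pow_succ (-m)]
      linear_combination (c ^ k * m) * hc

def trinomialDiscr {R : Type*} [CommRing R] (N : ℕ) (m : R) : R :=
  (-1) ^ (N * (N - 1) / 2) * (N ^ N * (-m) ^ (N - 1) - (N - 1) ^ (N - 1))

theorem PowerBasis.discr_eq_of_minpoly_eq_X_pow_sub_X_sub_C {F K : Type*} [Field F] [Field K]
    [Algebra F K] [Algebra.IsSeparable F K] (pb : PowerBasis F K) {N : ℕ} {m : F} (hN : 2 ≤ N)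
    (hN₁ : (N : F) ≠ 1) (hm : m ≠ 0) (hmin : minpoly F pb.gen = X ^ N - X - C m) :
    Algebra.discr F pb.basis = trinomialDiscr N m := by
  have := pb.finite
  rw [trinomialDiscr, Algebra.discr_powerBasis_eq_norm,
    pb.norm_aeval_derivative_minpoly_of_eq_X_pow_sub_X_sub_C hN hN₁ hm hmin, pb.finrank,
    ← pb.natDegree_minpoly, hmin, natDegree_X_pow_sub_X_sub_C hN]

theorem trinomialDiscr_injOn {R : Type*} [CommRing R] [LinearOrder R] [IsStrictOrderedRing R]
    {N : ℕ} (hN : 2 ≤ N) : Set.InjOn (trinomialDiscr (R := R) N) (Set.Ioi 0) := by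
  intro m₁ hm₁ m₂ hm₂ h
  rw [Set.mem_Ioi] at hm₁ hm₂
  rw [trinomialDiscr, trinomialDiscr, mul_right_inj' (pow_ne_zero _ (neg_ne_zero.mpr one_ne_zero)),
    sub_left_inj, mul_right_inj' (pow_ne_zero _ (by positivity))] at h
  obtain h | ⟨h, -⟩ := (pow_eq_pow_iff_of_ne_zero (by omega : N - 1 ≠ 0)).mp h
  · exact neg_inj.mp h
  · linarith

theorem Algebra.adjoin_singleton_map_eq_integralClosure {R A B : Type*} [CommRing R] [CommRing A]
    [CommRing B] [Algebra R A] [Algebra R B] (e : A ≃ₐ[R] B) {x : A}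
    (h : Algebra.adjoin R {x} = integralClosure R A) :
    Algebra.adjoin R {e x} = integralClosure R B := by
  rw [← Set.image_singleton, ← AlgEquiv.coe_toAlgHom, ← AlgHom.map_adjoin, h]
  exact integralClosure_map_algEquiv e

theorem PowerBasis.discr_eq_of_adjoin_gen_eq_integralClosure {K : Type*} [Field K]
    [NumberField K] (pb₁ pb₂ : PowerBasis ℚ K)
    (h₁ : Algebra.adjoin ℤ {pb₁.gen} = integralClosure ℤ K)
    (h₂ : Algebra.adjoin ℤ {pb₂.gen} = integralClosure ℤ K) :
    Algebra.discr ℚ pb₁.basis = Algebra.discr ℚ pb₂.basis := by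
  have hint₁ : IsIntegral ℤ pb₁.gen := by
    rw [← mem_integralClosure_iff, ← h₁]
    exact Algebra.self_mem_adjoin_singleton ℤ _
  have hint₂ : IsIntegral ℤ pb₂.gen := by
    rw [← mem_integralClosure_iff, ← h₂]
    exact Algebra.self_mem_adjoin_singleton ℤ _
  obtain ⟨P, hP⟩ : ∃ P : ℤ[X], aeval pb₁.gen P = pb₂.gen := by
    rw [← AlgHom.mem_range, ← Algebra.adjoin_singleton_eq_range_aeval, h₁]; exact hint₂
  obtain ⟨Q, hQ⟩ : ∃ Q : ℤ[X], aeval pb₂.gen Q = pb₁.gen := by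
    rw [← AlgHom.mem_range, ← Algebra.adjoin_singleton_eq_range_aeval, h₂]; exact hint₁
  exact Algebra.discr_eq_discr_of_toMatrix_coeff_isIntegral K
    (PowerBasis.toMatrix_isIntegral hP hint₁
      (minpoly.isIntegrallyClosed_eq_field_fractions' ℚ hint₁))
    (PowerBasis.toMatrix_isIntegral hQ hint₂
      (minpoly.isIntegrallyClosed_eq_field_fractions' ℚ hint₂))

-- `L` gets its canonical `ℚ`-algebra structure: for an arbitrary `[Algebra ℚ L]`, the one that
-- `ℚ⟮θ⟯` inherits is not defeq to the one `NumberField` uses.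
open IntermediateField in
theorem IsMonogenic.exists_powerBasis {f : ℤ[X]} (hf : IsMonogenic f) {L : Type*} [Field L]
    [CharZero L] {θ : L} (hθ : aeval θ f = 0) {K : IntermediateField ℚ L} (hK : ℚ⟮θ⟯ = K) :
    ∃ pb : PowerBasis ℚ K, minpoly ℚ pb.gen = f.map (algebraMap ℤ ℚ) ∧
      Algebra.adjoin ℤ {pb.gen} = integralClosure ℤ K := by
  subst hK
  have hθℚ : aeval θ (f.map (algebraMap ℤ ℚ)) = 0 := by rwa [aeval_map_algebraMap]
  have hmin : minpoly ℚ θ = f.map (algebraMap ℤ ℚ) :=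
    (minpoly.eq_of_irreducible_of_monic hf.2.1 hθℚ (hf.1.map _)).symm
  have hint : IsIntegral ℚ θ := ⟨_, hf.1.map _, hθℚ⟩
  refine ⟨adjoin.powerBasis hint, (minpoly_gen ℚ θ).trans hmin, ?_⟩
  have h := hf.2.2
  rw [← hmin] at h
  have := Algebra.adjoin_singleton_map_eq_integralClosure
    ((adjoinRootEquivAdjoin ℚ hint).restrictScalars ℤ) h
  rwa [AlgEquiv.restrictScalars_apply, adjoinRootEquivAdjoin_apply_root] at this

theorem stmt_18_general (N b₁ b₂ : ℕ) (hN : 3 ≤ N)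
    (h₁ : IsMonogenic (X ^ N - X - C (((N : ℤ) - 1) * (N : ℤ) ^ b₁)))
    (h₂ : IsMonogenic (X ^ N - X - C (((N : ℤ) - 1) * (N : ℤ) ^ b₂)))
    (θ₁ θ₂ : ℂ)
    (hθ₁ : aeval θ₁ (X ^ N - X - C (((N : ℤ) - 1) * (N : ℤ) ^ b₁)) = 0)
    (hθ₂ : aeval θ₂ (X ^ N - X - C (((N : ℤ) - 1) * (N : ℤ) ^ b₂)) = 0)
    (heq : IntermediateField.adjoin ℚ {θ₁} = IntermediateField.adjoin ℚ {θ₂}) :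
    b₁ = b₂ := by
  obtain ⟨pb₁, hmin₁, hZ₁⟩ := h₁.exists_powerBasis hθ₁ rfl
  obtain ⟨pb₂, hmin₂, hZ₂⟩ := h₂.exists_powerBasis hθ₂ heq.symm
  have : FiniteDimensional ℚ (IntermediateField.adjoin ℚ {θ₁}) := pb₁.finite
  have : NumberField (IntermediateField.adjoin ℚ {θ₁}) := ⟨⟩
  have hdiscr := pb₁.discr_eq_of_adjoin_gen_eq_integralClosure pb₂ hZ₁ hZ₂
  simp only [Polynomial.map_sub, Polynomial.map_pow, map_X, Polynomial.map_C, algebraMap_int_eq,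
    Int.coe_castRingHom] at hmin₁ hmin₂
  have hm (b : ℕ) : (0 : ℚ) < ((((N : ℤ) - 1) * (N : ℤ) ^ b : ℤ) : ℚ) := by
    have : (0 : ℤ) < ((N : ℤ) - 1) * (N : ℤ) ^ b := mul_pos (by omega) (pow_pos (by omega) b)
    exact_mod_cast this
  have hN₁ : (N : ℚ) ≠ 1 := by norm_cast; omega
  rw [pb₁.discr_eq_of_minpoly_eq_X_pow_sub_X_sub_C (by omega) hN₁ (hm b₁).ne' hmin₁,
    pb₂.discr_eq_of_minpoly_eq_X_pow_sub_X_sub_C (by omega) hN₁ (hm b₂).ne' hmin₂] at hdiscr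
  have hm_eq := trinomialDiscr_injOn (by omega) (hm b₁) (hm b₂) hdiscr
  have hpow : (N : ℤ) ^ b₁ = (N : ℤ) ^ b₂ :=
    mul_left_cancel₀ (show (N : ℤ) - 1 ≠ 0 by omega) (by exact_mod_cast hm_eq)
  exact Nat.pow_right_injective (show 2 ≤ N by omega) (by exact_mod_cast hpow)

theorem stmt_18 (N b₁ b₂ : ℕ) (hN : 3 ≤ N) (hmod : N % 4 = 3)
    (hb₁ : 1 ≤ b₁) (hb₂ : 1 ≤ b₂)
    (h₁ : IsMonogenic (X ^ N - X - C (((N : ℤ) - 1) * (N : ℤ) ^ b₁)))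
    (h₂ : IsMonogenic (X ^ N - X - C (((N : ℤ) - 1) * (N : ℤ) ^ b₂)))
    (θ₁ θ₂ : ℂ)
    (hθ₁ : aeval θ₁ (X ^ N - X - C (((N : ℤ) - 1) * (N : ℤ) ^ b₁)) = 0)
    (hθ₂ : aeval θ₂ (X ^ N - X - C (((N : ℤ) - 1) * (N : ℤ) ^ b₂)) = 0)
    (heq : IntermediateField.adjoin ℚ {θ₁} = IntermediateField.adjoin ℚ {θ₂}) :
    b₁ = b₂ :=
  stmt_18_general N b₁ b₂ hN h₁ h₂ θ₁ θ₂ hθ₁ hθ₂ heq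
end
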